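/- arXiv:1909.01447 — 5 statements merged into one kernel-verified Lean document; each statement's English description precedes it below -/
import Mathlib

section
/- Let R be a complete Noetherian local domain with maximal ideal m. For r ∈ R define v_m(r) = sup{i : r ∈ m^i}. The set of power series f = Σ_u f_u X^u in R[[X_1,...,X_n]] satisfying liminf over k→∞ of inf_{|u|>k} v_m(f_u)/|u| > 0 forms an R-subalgebra of R[[X_1,...,X_n]]. -/
open scoped Classical

/-- A multivariate power series `f` over a complete Noetherian local domain `R`
is *overconvergent* if `liminf_{|u|→∞} v_m(f_u)/|u| > 0`, i.e. there are `c > 0`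
and `K` such that for all multi-indices `u` with `|u| > K` and all `j : ℕ` with
`j ≤ c·|u|`, the coefficient `f_u` lies in `m^j` (so `v_m(f_u) ≥ c·|u|`). -/
def IsOverconvergent {R : Type*} [CommRing R] [IsNoetherianRing R] [IsLocalRing R]
    [IsDomain R] [IsAdicComplete (IsLocalRing.maximalIdeal R) R]
    {n : ℕ} (f : MvPowerSeries (Fin n) R) : Prop :=
  ∃ c : ℝ, 0 < c ∧ ∃ K : ℕ, ∀ u : Fin n →₀ ℕ, K < (u.sum fun _ k => k) →
    ∀ j : ℕ, (j : ℝ) ≤ c * ((u.sum fun _ k => k : ℕ) : ℝ) →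
      f u ∈ IsLocalRing.maximalIdeal R ^ j

section Aux

variable {R : Type*} [CommRing R] [IsNoetherianRing R] [IsLocalRing R]
    [IsDomain R] [IsAdicComplete (IsLocalRing.maximalIdeal R) R] {n : ℕ}

lemma IsOverconvergent.mul {f g : MvPowerSeries (Fin n) R}
    (hf : IsOverconvergent f) (hg : IsOverconvergent g) : IsOverconvergent (f * g) := by
  obtain ⟨c₁, hc₁, K₁, h₁⟩ := hf
  obtain ⟨c₂, hc₂, K₂, h₂⟩ := hg
  refine ⟨min c₁ c₂ / 2, by positivity, 2 * max K₁ K₂ + 1, fun u hu j hj => ?_⟩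
  show (f * g) u ∈ _
  have hmul : (f * g) u = ∑ p ∈ Finset.HasAntidiagonal.antidiagonal u, f p.1 * g p.2 :=
    MvPowerSeries.coeff_mul u f g
  rw [hmul]
  refine Ideal.sum_mem _ fun p hp => ?_
  have hpu : p.1 + p.2 = u := Finset.HasAntidiagonal.mem_antidiagonal.mp hp
  set s := p.1.sum fun _ k => k with hs
  set t := p.2.sum fun _ k => k with ht
  have hst : s + t = u.sum fun _ k => k := by
    rw [← hpu]
    exact (Finsupp.sum_add_index' (fun _ => rfl) (fun _ _ _ => rfl)).symm
  set N := u.sum fun _ k => k with hN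
  by_cases h2 : N ≤ 2 * s
  · have hsK : K₁ < s := by omega
    have hj' : (j : ℝ) ≤ c₁ * (s : ℝ) := by
      have hNs : (N : ℝ) ≤ 2 * s := by exact_mod_cast h2
      have : min c₁ c₂ / 2 * N ≤ c₁ * s := by
        have h1 : min c₁ c₂ ≤ c₁ := min_le_left _ _
        nlinarith [Nat.cast_nonneg (α := ℝ) N, Nat.cast_nonneg (α := ℝ) s]
      linarith
    exact Ideal.mul_mem_right _ _ (h₁ p.1 hsK j hj')
  · have htK : K₂ < t := by omega
    have hj' : (j : ℝ) ≤ c₂ * (t : ℝ) := by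
      have hNt : (N : ℝ) ≤ 2 * t := by
        have : N ≤ 2 * t := by omega
        exact_mod_cast this
      have : min c₁ c₂ / 2 * N ≤ c₂ * t := by
        have h1 : min c₁ c₂ ≤ c₂ := min_le_right _ _
        nlinarith [Nat.cast_nonneg (α := ℝ) N, Nat.cast_nonneg (α := ℝ) t]
      linarith
    exact Ideal.mul_mem_left _ _ (h₂ p.2 htK j hj')

lemma IsOverconvergent.add {f g : MvPowerSeries (Fin n) R}
    (hf : IsOverconvergent f) (hg : IsOverconvergent g) : IsOverconvergent (f + g) := by
  obtain ⟨c₁, hc₁, K₁, h₁⟩ := hf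
  obtain ⟨c₂, hc₂, K₂, h₂⟩ := hg
  refine ⟨min c₁ c₂, lt_min hc₁ hc₂, max K₁ K₂, fun u hu j hj => ?_⟩
  have hN : (0 : ℝ) ≤ ((u.sum fun _ k => k : ℕ) : ℝ) := Nat.cast_nonneg _
  have hj1 : (j : ℝ) ≤ c₁ * ((u.sum fun _ k => k : ℕ) : ℝ) :=
    le_trans hj (mul_le_mul_of_nonneg_right (min_le_left _ _) hN)
  have hj2 : (j : ℝ) ≤ c₂ * ((u.sum fun _ k => k : ℕ) : ℝ) :=
    le_trans hj (mul_le_mul_of_nonneg_right (min_le_right _ _) hN)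
  exact add_mem (h₁ u (lt_of_le_of_lt (le_max_left _ _) hu) j hj1)
    (h₂ u (lt_of_le_of_lt (le_max_right _ _) hu) j hj2)

lemma IsOverconvergent.one : IsOverconvergent (1 : MvPowerSeries (Fin n) R) := by
  refine ⟨1, one_pos, 0, fun u hu j hj => ?_⟩
  have hu0 : u ≠ 0 := by rintro rfl; simp at hu
  have h : (1 : MvPowerSeries (Fin n) R) u = 0 := by
    have := MvPowerSeries.coeff_one (R := R) u
    exact (by simpa [hu0] using this : MvPowerSeries.coeff u (1 : MvPowerSeries (Fin n) R) = 0)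
  rw [h]; exact zero_mem _

lemma IsOverconvergent.zero : IsOverconvergent (0 : MvPowerSeries (Fin n) R) :=
  ⟨1, one_pos, 0, fun _ _ _ _ => zero_mem _⟩

lemma IsOverconvergent.algebraMap_mem (r : R) :
    IsOverconvergent (algebraMap R (MvPowerSeries (Fin n) R) r) := by
  refine ⟨1, one_pos, 0, fun u hu j hj => ?_⟩
  have hu0 : u ≠ 0 := by rintro rfl; simp at hu
  have h : (algebraMap R (MvPowerSeries (Fin n) R) r) u = 0 := by
    have := MvPowerSeries.coeff_C (R := R) u r
    exact (by simpa [hu0] using this : MvPowerSeries.coeff u (MvPowerSeries.C r : MvPowerSeries (Fin n) R) = 0)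
  rw [h]; exact zero_mem _

end Aux

/-- The overconvergent power series in `n` variables over a complete Noetherian
local domain `R` form an `R`-subalgebra of `R[[X_1,...,X_n]]`. -/
theorem overconvergent_isSubalgebra
    (R : Type*) [CommRing R] [IsNoetherianRing R] [IsLocalRing R] [IsDomain R]
    [IsAdicComplete (IsLocalRing.maximalIdeal R) R] (n : ℕ) :
    ∃ S : Subalgebra R (MvPowerSeries (Fin n) R),
      (S : Set (MvPowerSeries (Fin n) R)) = {f | IsOverconvergent f} := by
  refine ⟨?_, ?_⟩
  · exact
    { carrier := {f | IsOverconvergent f},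
      mul_mem' := fun hf hg => hf.mul hg,
      one_mem' := IsOverconvergent.one,
      add_mem' := fun hf hg => hf.add hg,
      zero_mem' := IsOverconvergent.zero,
      algebraMap_mem' := IsOverconvergent.algebraMap_mem }
  · rfl
end

section
/- The Artin–Hasse exponential series E(t) = exp(Σ_{i≥0} t^{p^i}/p^i) has coefficients in Z_p; that is, E(t) ∈ 1 + t + t^2·Z_p[[t]], so in particular all coefficients are p-adic integers and the linear coefficient is 1. -/
open scoped Classical
open PowerSeries

section ArtinHasseAux

variable {p : ℕ} [Fact p.Prime]

private lemma ah_ode_unique {p : ℕ} [Fact p.Prime] (D X Y : PowerSeries ℚ_[p])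
    (hX : PowerSeries.derivative ℚ_[p] X = X * D)
    (hY : PowerSeries.derivative ℚ_[p] Y = Y * D)
    (h00 : PowerSeries.coeff 0 X = PowerSeries.coeff 0 Y) : X = Y := by
  ext n
  induction n using Nat.strong_induction_on with
  | _ n ih =>
    match n with
    | 0 => exact h00
    | Nat.succ n =>
      have hXn := congrArg (coeff n) hX
      have hYn := congrArg (coeff n) hY
      rw [PowerSeries.coeff_derivative] at hXn hYn
      have hne : ((n : ℚ_[p]) + 1) ≠ 0 := Nat.cast_add_one_ne_zero n
      have hsum : coeff n (X * D) = coeff n (Y * D) := by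
        rw [coeff_mul, coeff_mul]
        refine Finset.sum_congr rfl fun q hq => ?_
        have h1 : q.1 < n + 1 :=
          Nat.lt_succ_of_le (Finset.HasAntidiagonal.antidiagonal.fst_le hq)
        rw [ih q.1 h1]
      exact mul_right_cancel₀ hne (hXn.trans (hsum.trans hYn.symm))

private lemma ah_rec (E : PowerSeries ℚ_[p])
    (hE : PowerSeries.derivative ℚ_[p] E =
      E * PowerSeries.mk fun n : ℕ =>
        if ∃ i : ℕ, n + 1 = p ^ i then (1 : ℚ_[p]) else 0) (n : ℕ) :
    coeff (n + 1) E * (n + 1) =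
      ∑ k ∈ Finset.range (n + 1), coeff k E *
        (if ∃ i : ℕ, (n - k) + 1 = p ^ i then (1 : ℚ_[p]) else 0) := by
  have h := congrArg (coeff n) hE
  rw [PowerSeries.coeff_derivative, coeff_mul,
    Finset.Nat.sum_antidiagonal_eq_sum_range_succ_mk] at h
  simpa using h

private lemma ah_dF (E : PowerSeries ℚ_[p])
    (hrec : ∀ n : ℕ, coeff (n + 1) E * (n + 1) =
      ∑ k ∈ Finset.range (n + 1), coeff k E *
        (if ∃ i : ℕ, (n - k) + 1 = p ^ i then (1 : ℚ_[p]) else 0)) :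
    PowerSeries.derivative ℚ_[p]
        (mk fun n => if p ∣ n then coeff (n / p) E else 0) =
      (mk fun n => if p ∣ n then coeff (n / p) E else 0) *
      (mk fun n => if ∃ i : ℕ, n + 1 = p ^ (i + 1) then (p : ℚ_[p]) else 0) := by
  have hp : p.Prime := Fact.out
  ext n
  rw [PowerSeries.coeff_derivative, coeff_mul,
    Finset.Nat.sum_antidiagonal_eq_sum_range_succ_mk]
  simp only [coeff_mk]
  by_cases hpn : p ∣ (n + 1)
  · obtain ⟨m, hm⟩ := hpn
    have hm1 : 1 ≤ m := by
      rcases Nat.eq_zero_or_pos m with rfl | h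
      · simp at hm
      · exact h
    have hdiv : (n + 1) / p = m := by rw [hm]; exact Nat.mul_div_cancel_left m hp.pos
    rw [if_pos ⟨m, hm⟩, hdiv]
    set g : ℕ → ℚ_[p] := fun k => (if p ∣ k then coeff (k / p) E else 0) *
      (if ∃ i : ℕ, (n - k) + 1 = p ^ (i + 1) then (p : ℚ_[p]) else 0) with hg
    have hinj : Function.Injective (p * ·) :=
      fun a b h => Nat.eq_of_mul_eq_mul_left hp.pos h
    have hsub : (Finset.range m).map ⟨(p * ·), hinj⟩ ⊆ Finset.range (n + 1) := by
      intro k hk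
      simp only [Finset.mem_map, Finset.mem_range, Function.Embedding.coeFn_mk] at hk ⊢
      obtain ⟨i, hi, rfl⟩ := hk
      calc p * i < p * m := (Nat.mul_lt_mul_left hp.pos).mpr hi
      _ = n + 1 := hm.symm
    have hzero : ∀ k ∈ Finset.range (n + 1), k ∉ (Finset.range m).map ⟨(p * ·), hinj⟩ →
        g k = 0 := by
      intro k hk hnk
      by_cases hdk : p ∣ k
      · obtain ⟨i, rfl⟩ := hdk
        exfalso
        apply hnk
        simp only [Finset.mem_map, Finset.mem_range, Function.Embedding.coeFn_mk]
        refine ⟨i, ?_, rfl⟩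
        simp only [Finset.mem_range] at hk
        have : p * i < p * m := by omega
        exact Nat.lt_of_mul_lt_mul_left this
      · simp [hg, hdk]
    have hstep : ∑ k ∈ Finset.range (n + 1), g k = ∑ i ∈ Finset.range m, g (p * i) := by
      rw [← Finset.sum_subset hsub hzero, Finset.sum_map]
      rfl
    rw [hstep]
    have hterm : ∀ i ∈ Finset.range m, g (p * i) =
        (p : ℚ_[p]) * (coeff i E *
          (if ∃ l : ℕ, ((m - 1) - i) + 1 = p ^ l then (1 : ℚ_[p]) else 0)) := by
      intro i hi
      simp only [Finset.mem_range] at hi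
      have hlt : p * i < p * m := (Nat.mul_lt_mul_left hp.pos).mpr hi
      have hle : p * i ≤ n := by omega
      have harith : (n - p * i) + 1 = p * (m - i) := by
        have h2 : p * (m - i) = p * m - p * i := Nat.mul_sub p m i
        omega
      have hcond : (∃ l : ℕ, (n - p * i) + 1 = p ^ (l + 1)) ↔
          (∃ l : ℕ, ((m - 1) - i) + 1 = p ^ l) := by
        rw [harith]
        have hmi : ((m - 1) - i) + 1 = m - i := by omega
        rw [hmi]
        constructor
        · rintro ⟨l, hl⟩
          exact ⟨l, Nat.eq_of_mul_eq_mul_left hp.pos (by rw [hl, pow_succ, mul_comm])⟩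
        · rintro ⟨l, hl⟩
          exact ⟨l, by rw [hl, pow_succ, mul_comm]⟩
      simp only [hg, Nat.mul_div_cancel_left i hp.pos, if_pos (Dvd.intro i rfl)]
      by_cases hc : ∃ l : ℕ, ((m - 1) - i) + 1 = p ^ l
      · rw [if_pos (hcond.mpr hc), if_pos hc]; ring
      · rw [if_neg (fun h => hc (hcond.mp h)), if_neg hc]; ring
    rw [Finset.sum_congr rfl hterm, ← Finset.mul_sum]
    have := hrec (m - 1)
    have hm' : (m - 1) + 1 = m := by omega
    rw [hm'] at this
    rw [show ((m - 1 : ℕ) : ℚ_[p]) + 1 = (m : ℚ_[p]) by exact_mod_cast congrArg (Nat.cast : ℕ → ℚ_[p]) hm'] at this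
    rw [← this]
    have hcast : ((n : ℚ_[p]) + 1) = (p : ℚ_[p]) * (m : ℚ_[p]) := by
      exact_mod_cast congrArg (Nat.cast : ℕ → ℚ_[p]) hm
    rw [hcast]
    ring
  · rw [if_neg hpn, zero_mul]
    refine (Finset.sum_eq_zero fun k hk => ?_).symm
    simp only [Finset.mem_range] at hk
    by_cases hdk : p ∣ k
    · have hno : ¬ ∃ l : ℕ, (n - k) + 1 = p ^ (l + 1) := by
        rintro ⟨l, hl⟩
        apply hpn
        have h3 : n + 1 = k + ((n - k) + 1) := by omega
        rw [h3, hl]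
        exact Dvd.dvd.add hdk (dvd_pow_self p (Nat.succ_ne_zero l))
      rw [if_neg hno, mul_zero]
    · rw [if_neg hdk, zero_mul]

-- derivative of G = exp(pt)
private lemma ah_dG :
    PowerSeries.derivative ℚ_[p] (mk fun n => (p : ℚ_[p]) ^ n / (n.factorial : ℚ_[p])) =
      (mk fun n => (p : ℚ_[p]) ^ n / (n.factorial : ℚ_[p])) * C (p : ℚ_[p]) := by
  ext n
  rw [PowerSeries.coeff_derivative, coeff_mul_C, coeff_mk, coeff_mk]
  have h1 : ((n + 1).factorial : ℚ_[p]) = ((n + 1 : ℕ) : ℚ_[p]) * (n.factorial : ℚ_[p]) := by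
    rw [Nat.factorial_succ]; push_cast; ring
  have h2 : ((n + 1 : ℕ) : ℚ_[p]) ≠ 0 := Nat.cast_ne_zero.mpr (Nat.succ_ne_zero n)
  have h3 : ((n.factorial : ℕ) : ℚ_[p]) ≠ 0 := Nat.cast_ne_zero.mpr n.factorial_ne_zero
  have : ((n : ℚ_[p]) + 1) = ((n + 1 : ℕ) : ℚ_[p]) := by push_cast; ring
  have h6 : ((n : ℚ_[p]) + 1) * (n.factorial : ℚ_[p]) ≠ 0 :=
    mul_ne_zero (Nat.cast_add_one_ne_zero n) h3
  have h7 : ((n : ℚ_[p]) * (n.factorial : ℚ_[p]) + (n.factorial : ℚ_[p])) ≠ 0 := by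
    rw [← add_one_mul]; exact h6
  rw [this, h1]
  field_simp
  ring

private lemma ah_US :
    (mk fun n => if ∃ i : ℕ, n + 1 = p ^ (i + 1) then (p : ℚ_[p]) else 0) +
      C (p : ℚ_[p]) =
    C (p : ℚ_[p]) * mk fun n => if ∃ i : ℕ, n + 1 = p ^ i then (1 : ℚ_[p]) else 0 := by
  have hp : p.Prime := Fact.out
  ext n
  rw [map_add, coeff_C, coeff_mk]
  rw [show (C (p : ℚ_[p]) * mk fun n => if ∃ i : ℕ, n + 1 = p ^ i then (1 : ℚ_[p]) else 0)
      = (p : ℚ_[p]) • mk fun n => if ∃ i : ℕ, n + 1 = p ^ i then (1 : ℚ_[p]) else 0 from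
    (smul_eq_C_mul _ _).symm]
  rw [map_smul, coeff_mk, smul_eq_mul]
  rcases n with _ | k
  · have h1 : ¬ ∃ i : ℕ, 0 + 1 = p ^ (i + 1) := by
      rintro ⟨i, hi⟩
      have h4 : p ^ (i + 1) ≥ p := Nat.le_self_pow (Nat.succ_ne_zero i) p
      have h5 := hp.two_le
      omega
    have h2 : ∃ i : ℕ, 0 + 1 = p ^ i := ⟨0, (pow_zero p).symm⟩
    rw [if_pos rfl, if_neg h1, if_pos h2]
    simp
  · have h3 : (∃ i : ℕ, (k + 1) + 1 = p ^ (i + 1)) ↔ (∃ i : ℕ, (k + 1) + 1 = p ^ i) := by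
      constructor
      · rintro ⟨i, hi⟩; exact ⟨i + 1, hi⟩
      · rintro ⟨i, hi⟩
        match i with
        | 0 => simp at hi
        | Nat.succ j => exact ⟨j, hi⟩
    rw [if_neg (Nat.succ_ne_zero k)]
    by_cases hc : ∃ i : ℕ, (k + 1) + 1 = p ^ i
    · rw [if_pos (h3.mpr hc), if_pos hc]; simp
    · rw [if_neg (fun h => hc (h3.mp h)), if_neg hc]; simp

private lemma ah_key (E : PowerSeries ℚ_[p])
    (h0 : PowerSeries.coeff 0 E = 1)
    (hE : PowerSeries.derivative ℚ_[p] E =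
      E * PowerSeries.mk fun n : ℕ =>
        if ∃ i : ℕ, n + 1 = p ^ i then (1 : ℚ_[p]) else 0)
    (hdF : PowerSeries.derivative ℚ_[p]
        (mk fun n => if p ∣ n then coeff (n / p) E else 0) =
      (mk fun n => if p ∣ n then coeff (n / p) E else 0) *
      (mk fun n => if ∃ i : ℕ, n + 1 = p ^ (i + 1) then (p : ℚ_[p]) else 0))
    (hdG : PowerSeries.derivative ℚ_[p]
        (mk fun n => (p : ℚ_[p]) ^ n / (n.factorial : ℚ_[p])) =
      (mk fun n => (p : ℚ_[p]) ^ n / (n.factorial : ℚ_[p])) * C (p : ℚ_[p]))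
    (hode : ∀ (D X Y : PowerSeries ℚ_[p]),
      PowerSeries.derivative ℚ_[p] X = X * D →
      PowerSeries.derivative ℚ_[p] Y = Y * D →
      PowerSeries.coeff 0 X = PowerSeries.coeff 0 Y → X = Y) :
    E ^ p = (mk fun n => if p ∣ n then coeff (n / p) E else 0) *
      (mk fun n => (p : ℚ_[p]) ^ n / (n.factorial : ℚ_[p])) := by
  have hp : p.Prime := Fact.out
  set S : PowerSeries ℚ_[p] :=
    mk fun n => if ∃ i : ℕ, n + 1 = p ^ i then (1 : ℚ_[p]) else 0 with hS
  set F : PowerSeries ℚ_[p] :=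
    mk fun n => if p ∣ n then coeff (n / p) E else 0 with hF
  set G : PowerSeries ℚ_[p] :=
    mk fun n => (p : ℚ_[p]) ^ n / (n.factorial : ℚ_[p]) with hG
  set U : PowerSeries ℚ_[p] :=
    mk fun n => if ∃ i : ℕ, n + 1 = p ^ (i + 1) then (p : ℚ_[p]) else 0 with hU
  apply hode (C (p : ℚ_[p]) * S)
  · rw [Derivation.leibniz_pow, hE]
    simp only [smul_eq_mul, nsmul_eq_mul]
    have hEp : E ^ (p - 1) * E = E ^ p := by
      rw [← pow_succ, Nat.sub_add_cancel hp.one_le]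
    have hC : ((p : ℕ) : PowerSeries ℚ_[p]) = C (p : ℚ_[p]) := by
      simp [map_natCast]
    rw [hC, ← hEp]
    ring
  · rw [Derivation.leibniz, hdF, hdG]
    simp only [smul_eq_mul]
    calc F * (G * C (p : ℚ_[p])) + G * (F * U)
        = F * G * (U + C (p : ℚ_[p])) := by ring
      _ = F * G * (C (p : ℚ_[p]) * S) := by rw [ah_US]
  · have hcE : coeff 0 (E ^ p) = 1 := by
      rw [coeff_zero_eq_constantCoeff_apply, map_pow,
        ← coeff_zero_eq_constantCoeff_apply, h0, one_pow]
    have hcF : coeff 0 F = 1 := by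
      rw [hF, coeff_mk, if_pos (dvd_zero p), Nat.zero_div, h0]
    have hcG : coeff 0 G = 1 := by
      rw [hG, coeff_mk]
      simp
    rw [hcE, coeff_zero_eq_constantCoeff_apply, map_mul,
      ← coeff_zero_eq_constantCoeff_apply, ← coeff_zero_eq_constantCoeff_apply (φ := G),
      hcF, hcG, one_mul]

private lemma ah_val_factorial {k : ℕ} (hk : 1 ≤ k) :
    padicValNat p (k.factorial) ≤ k - 1 := by
  have hp : Nat.Prime p := Fact.out
  have hk0 : k ≠ 0 := by omega
  have hne : p.digits k ≠ [] := Nat.digits_ne_nil_iff_ne_zero.mpr hk0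
  have hlast := Nat.getLast_digit_ne_zero p hk0
  have hmem := List.getLast_mem hne
  have hdig : 1 ≤ (p.digits k).sum := by
    calc 1 ≤ (p.digits k).getLast hne := Nat.one_le_iff_ne_zero.mpr hlast
    _ ≤ (p.digits k).sum := List.single_le_sum (fun x _ => Nat.zero_le x) _ hmem
  have hleg := sub_one_mul_padicValNat_factorial (p := p) k
  calc padicValNat p (k.factorial)
      ≤ (p - 1) * padicValNat p (k.factorial) :=
        Nat.le_mul_of_pos_left _ (by have := hp.two_le; omega)
    _ = k - (p.digits k).sum := hleg
    _ ≤ k - 1 := Nat.sub_le_sub_left hdig k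

private lemma ah_exp_norm {k : ℕ} (hk : 1 ≤ k) :
    ‖(p : ℚ_[p]) ^ k / (k.factorial : ℚ_[p])‖ ≤ (p : ℝ)⁻¹ := by
  have hp : Nat.Prime p := Fact.out
  set v := padicValNat p k.factorial with hv
  have hdvd : p ^ v ∣ k.factorial := pow_padicValNat_dvd
  set m := k.factorial / p ^ v with hmdef
  have hm : k.factorial = p ^ v * m := (Nat.mul_div_cancel' hdvd).symm
  have hndvd : ¬ p ∣ m := by
    rintro ⟨c, hc⟩
    have h2 : p ^ (v + 1) ∣ k.factorial := ⟨c, by rw [hm, hc, pow_succ]; ring⟩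
    exact pow_succ_padicValNat_not_dvd k.factorial_ne_zero h2
  have hnorm_m : ‖(m : ℚ_[p])‖ = 1 := by
    have hle : ‖((m : ℤ) : ℚ_[p])‖ ≤ 1 := Padic.norm_int_le_one _
    have hnlt : ¬ ‖((m : ℤ) : ℚ_[p])‖ < 1 := by
      rw [Padic.norm_intCast_lt_one_iff]
      exact_mod_cast hndvd
    have : ‖((m : ℤ) : ℚ_[p])‖ = 1 := le_antisymm hle (not_lt.mp hnlt)
    exact_mod_cast this
  have hnorm_fac : ‖((k.factorial : ℕ) : ℚ_[p])‖ = ((p : ℝ)⁻¹) ^ v := by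
    have hcast : ((k.factorial : ℕ) : ℚ_[p]) = (p : ℚ_[p]) ^ v * (m : ℚ_[p]) := by
      exact_mod_cast congrArg (Nat.cast : ℕ → ℚ_[p]) hm
    rw [hcast, norm_mul, norm_pow, Padic.norm_p, hnorm_m, mul_one]
  have hvk : v ≤ k - 1 := ah_val_factorial hk
  have hp1 : (1 : ℝ) < p := by exact_mod_cast hp.one_lt
  have hppos : (0 : ℝ) < p := by linarith
  have hipos : (0 : ℝ) < (p : ℝ)⁻¹ := by positivity
  rw [norm_div, norm_pow, Padic.norm_p, hnorm_fac]
  rw [div_eq_mul_inv, ← pow_sub₀ ((p : ℝ)⁻¹) (ne_of_gt hipos) (show v ≤ k by omega)]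
  have h9 : ((p : ℝ)⁻¹) ^ (k - v) ≤ ((p : ℝ)⁻¹) ^ 1 :=
    pow_le_pow_of_le_one (le_of_lt hipos)
      (by rw [inv_le_one_iff₀]; right; linarith) (by omega)
  simpa using h9

private lemma ah_coeff_mul_zero {n : ℕ} (W Z : PowerSeries ℚ_[p])
    (hZ : ∀ i ≤ n, coeff i Z = 0) : coeff n (W * Z) = 0 := by
  rw [coeff_mul]
  refine Finset.sum_eq_zero fun q hq => ?_
  rw [Finset.HasAntidiagonal.mem_antidiagonal] at hq
  rw [hZ q.2 (by omega), mul_zero]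

private lemma ah_coeff_pow (E : PowerSeries ℚ_[p]) (h0 : coeff 0 E = 1)
    {n : ℕ} (hn : 1 ≤ n) (T : Polynomial ℚ_[p])
    (hT : ∀ k, T.coeff k = if k < n then coeff k E else 0) :
    coeff n (E ^ p) = p * coeff n E + (T ^ p).coeff n := by
  have hp : p.Prime := Fact.out
  set q := p - 1 with hq
  have hpq : p = q + 1 := (Nat.sub_add_cancel hp.one_le).symm
  set R : PowerSeries ℚ_[p] := E - (T : PowerSeries ℚ_[p]) with hRdef
  have hRc : ∀ i, coeff i R = coeff i E - T.coeff i := by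
    intro i; rw [hRdef, map_sub, Polynomial.coeff_coe]
  have hR : ∀ i < n, coeff i R = 0 := by
    intro i hi; rw [hRc, hT, if_pos hi, sub_self]
  have hRn : coeff n R = coeff n E := by
    rw [hRc, hT, if_neg (lt_irrefl n), sub_zero]
  have hRR : ∀ i ≤ n, coeff i (R * R) = 0 := by
    intro i hi
    rw [coeff_mul]
    refine Finset.sum_eq_zero fun z hz => ?_
    rw [Finset.HasAntidiagonal.mem_antidiagonal] at hz
    rcases lt_or_ge z.1 n with h | h
    · rw [hR z.1 h, zero_mul]
    · have : z.2 < n := by omega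
      rw [hR z.2 this, mul_zero]
  have hsplit : E = (T : PowerSeries ℚ_[p]) + R := by rw [hRdef]; ring
  have hT0 : coeff 0 (T : PowerSeries ℚ_[p]) = 1 := by
    rw [Polynomial.coeff_coe, hT, if_pos (show 0 < n by omega), h0]
  calc coeff n (E ^ p)
      = coeff n (((T : PowerSeries ℚ_[p]) + R) ^ p) := by rw [← hsplit]
    _ = ∑ k ∈ Finset.range (p + 1), coeff n
        ((T : PowerSeries ℚ_[p]) ^ k * R ^ (p - k) * ((p.choose k : ℕ) : PowerSeries ℚ_[p])) := by
        rw [add_pow, map_sum]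
    _ = p * coeff n E + (T ^ p).coeff n := by
        rw [show p + 1 = q + 2 by omega]
        rw [Finset.sum_range_succ, Finset.sum_range_succ]
        have hz : ∀ k ∈ Finset.range q, coeff n
            ((T : PowerSeries ℚ_[p]) ^ k * R ^ (p - k)
              * ((p.choose k : ℕ) : PowerSeries ℚ_[p])) = 0 := by
          intro k hk
          rw [Finset.mem_range] at hk
          have h2 : 2 ≤ p - k := by omega
          have hpow : R ^ (p - k) = R ^ (p - k - 2) * (R * R) := by
            rw [← pow_two, ← pow_add]
            congr 1
            omega
          have harr : (T : PowerSeries ℚ_[p]) ^ k * R ^ (p - k)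
              * ((p.choose k : ℕ) : PowerSeries ℚ_[p])
              = ((T : PowerSeries ℚ_[p]) ^ k * R ^ (p - k - 2)
                * ((p.choose k : ℕ) : PowerSeries ℚ_[p])) * (R * R) := by
            rw [hpow]; ring
          rw [harr]
          exact ah_coeff_mul_zero _ _ hRR
        rw [Finset.sum_eq_zero hz, zero_add]
        have hterm1 : coeff n ((T : PowerSeries ℚ_[p]) ^ q * R ^ (p - q)
            * ((p.choose q : ℕ) : PowerSeries ℚ_[p])) = p * coeff n E := by
          have hpq1 : p - q = 1 := by omega
          have hch : p.choose q = p := by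
            rw [hpq]; exact Nat.choose_succ_self_right q
          rw [hpq1, pow_one, hch]
          rw [show (T : PowerSeries ℚ_[p]) ^ q * R * ((p : ℕ) : PowerSeries ℚ_[p])
            = ((p : ℕ) : PowerSeries ℚ_[p]) * ((T : PowerSeries ℚ_[p]) ^ q * R) by ring]
          rw [show ((p : ℕ) : PowerSeries ℚ_[p]) = C ((p : ℕ) : ℚ_[p]) by
            simp [map_natCast]]
          rw [coeff_C_mul]
          have hmain : coeff n ((T : PowerSeries ℚ_[p]) ^ q * R) = coeff n E := by
            rw [coeff_mul]
            rw [Finset.sum_eq_single_of_mem (0, n)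
              (by rw [Finset.HasAntidiagonal.mem_antidiagonal]; simp)]
            · rw [coeff_zero_eq_constantCoeff_apply, map_pow,
                ← coeff_zero_eq_constantCoeff_apply, hT0, one_pow, one_mul, hRn]
            · intro b hb hbne
              rw [Finset.HasAntidiagonal.mem_antidiagonal] at hb
              rcases lt_or_ge b.2 n with h | h
              · rw [hR b.2 h, mul_zero]
              · exfalso
                apply hbne
                have h1 : b.2 = n := by omega
                have h2 : b.1 = 0 := by omega
                rw [Prod.ext_iff]
                exact ⟨h2, h1⟩
          rw [hmain]
        have hterm2 : coeff n ((T : PowerSeries ℚ_[p]) ^ (q + 1) * R ^ (p - (q + 1))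
            * ((p.choose (q + 1) : ℕ) : PowerSeries ℚ_[p])) = (T ^ p).coeff n := by
          have h1 : p - (q + 1) = 0 := by omega
          have h2 : p.choose (q + 1) = 1 := by rw [← hpq]; exact Nat.choose_self p
          rw [h1, h2, pow_zero, mul_one, Nat.cast_one, mul_one, ← hpq,
            ← Polynomial.coe_pow, Polynomial.coeff_coe]
        rw [hterm1, hterm2]

private lemma ah_frob (n : ℕ) (T' : Polynomial ℤ_[p]) :
    PadicInt.toZMod ((T' ^ p).coeff n) =
      if p ∣ n then PadicInt.toZMod (T'.coeff (n / p)) else 0 := by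
  have hp : p.Prime := Fact.out
  set g : Polynomial (ZMod p) := T'.map PadicInt.toZMod with hg
  have h1 : PadicInt.toZMod ((T' ^ p).coeff n) = (g ^ p).coeff n := by
    rw [hg, ← Polynomial.coeff_map, Polynomial.map_pow]
  have h2 : g ^ p = (Polynomial.expand (ZMod p) p g).map (frobenius (ZMod p) p) :=
    (Polynomial.map_frobenius_expand p g).symm
  rw [h1, h2, ZMod.frobenius_zmod, Polynomial.map_id, Polynomial.coeff_expand hp.pos]
  split_ifs with h
  · rw [hg, Polynomial.coeff_map]
  · rfl

private lemma ah_norm_of_toZMod_eq_zero {x : ℤ_[p]} (h : PadicInt.toZMod x = 0) :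
    ‖(x : ℚ_[p])‖ ≤ (p : ℝ)⁻¹ := by
  have hker : x ∈ RingHom.ker (PadicInt.toZMod : ℤ_[p] →+* ZMod p) := h
  rw [PadicInt.ker_toZMod, PadicInt.maximalIdeal_eq_span_p,
    Ideal.mem_span_singleton] at hker
  obtain ⟨y, rfl⟩ := hker
  push_cast
  rw [norm_mul, Padic.norm_p]
  have hy : ‖(y : ℚ_[p])‖ ≤ 1 := y.2
  have : (0:ℝ) ≤ (p : ℝ)⁻¹ := by positivity
  calc (p : ℝ)⁻¹ * ‖(y : ℚ_[p])‖ ≤ (p : ℝ)⁻¹ * 1 := by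
        exact mul_le_mul_of_nonneg_left hy this
    _ = (p : ℝ)⁻¹ := mul_one _

end ArtinHasseAux

/-- The Artin–Hasse exponential `E(t) = exp(Σ_{i≥0} t^{p^i} / p^i) ∈ ℚ_p[[t]]`,
characterized as the unique power series with constant term `1` satisfying
`E' = E · (Σ_{i≥0} t^{p^i − 1})`, has all coefficients in `ℤ_p`
(i.e. of norm at most `1`) and linear coefficient equal to `1`. -/
theorem artinHasse_coeffs_padicInt
    (p : ℕ) [Fact p.Prime] (E : PowerSeries ℚ_[p])
    (h0 : PowerSeries.coeff 0 E = 1)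
    (hE : PowerSeries.derivative ℚ_[p] E =
      E * PowerSeries.mk fun n : ℕ =>
        if ∃ i : ℕ, n + 1 = p ^ i then (1 : ℚ_[p]) else 0) :
    PowerSeries.coeff 1 E = 1 ∧
    ∀ n : ℕ, ‖PowerSeries.coeff n E‖ ≤ 1 := by
  have hrec := ah_rec E hE
  have h1 : PowerSeries.coeff 1 E = 1 := by
    have h := hrec 0
    rw [Finset.sum_range_one] at h
    have hcond : ∃ i : ℕ, (0 - 0) + 1 = p ^ i := ⟨0, by simp⟩
    rw [h0, if_pos hcond, one_mul] at h
    simpa using h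
  refine ⟨h1, ?_⟩
  have hkey := ah_key E h0 hE (ah_dF E hrec) ah_dG
    (fun D X Y hX hY h00 => ah_ode_unique D X Y hX hY h00)
  have hp : Nat.Prime p := Fact.out
  intro n
  induction n using Nat.strong_induction_on with
  | _ n ih =>
    rcases Nat.eq_zero_or_pos n with rfl | hn
    · rw [h0]; simp
    · set a : ℕ → ℚ_[p] := fun k => coeff k E with ha
      set b : ℕ → ℤ_[p] := fun k => if h : k < n then ⟨a k, ih k h⟩ else 0 with hb
      set T' : Polynomial ℤ_[p] := ∑ k ∈ Finset.range n, Polynomial.monomial k (b k) with hT'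
      have hT'c : ∀ k, T'.coeff k = if k < n then b k else 0 := by
        intro k
        rw [hT', Polynomial.finset_sum_coeff]
        simp only [Polynomial.coeff_monomial]
        rw [Finset.sum_ite_eq' (Finset.range n) k b]
        simp [Finset.mem_range]
      set ι : ℤ_[p] →+* ℚ_[p] := PadicInt.Coe.ringHom with hι
      have hιval : ∀ x : ℤ_[p], ι x = (x : ℚ_[p]) := fun _ => rfl
      set T : Polynomial ℚ_[p] := T'.map ι with hTdef
      have hbcoe : ∀ k, k < n → ι (b k) = a k := by
        intro k h
        rw [hb]
        simp only [dif_pos h]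
        exact (congrArg ι (dif_pos h)).trans rfl
      have hT : ∀ k, T.coeff k = if k < n then a k else 0 := by
        intro k
        rw [hTdef, Polynomial.coeff_map, hT'c]
        split_ifs with h
        · exact hbcoe k h
        · exact map_zero ι
      have hAn := ah_coeff_pow E h0 hn T hT
      have hTpow : (T ^ p).coeff n = ι ((T' ^ p).coeff n) := by
        rw [hTdef, ← Polynomial.map_pow, Polynomial.coeff_map]
      have hnp : p ∣ n → n / p < n := fun _ => Nat.div_lt_self (by omega) hp.one_lt
      set c : ℤ_[p] := (T' ^ p).coeff n with hc
      set d : ℤ_[p] := if p ∣ n then T'.coeff (n / p) else 0 with hd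
      have hcong : PadicInt.toZMod (d - c) = 0 := by
        rw [map_sub, hc, ah_frob n T', hd]
        split_ifs with h
        · rw [sub_self]
        · rw [map_zero, sub_self]
      have hnorm1 : ‖ι (d - c)‖ ≤ (p : ℝ)⁻¹ := by rw [hιval]; exact ah_norm_of_toZMod_eq_zero hcong
      have hδ : ι d = (if p ∣ n then a (n / p) else 0) := by
        rw [hd]
        split_ifs with h
        · rw [hT'c, if_pos (hnp h)]
          exact hbcoe _ (hnp h)
        · exact map_zero ι
      -- coefficient of the product
      have hFG := congrArg (coeff n) hkey
      rw [coeff_mul] at hFG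
      simp only [coeff_mk] at hFG
      have hmem : ((n, 0) : ℕ × ℕ) ∈ Finset.HasAntidiagonal.antidiagonal n := by
        rw [Finset.HasAntidiagonal.mem_antidiagonal]
        simp
      rw [← Finset.add_sum_erase _ _ hmem] at hFG
      have hval0 : (if p ∣ (n, 0).1 then a ((n, 0).1 / p) else 0) *
          ((p : ℚ_[p]) ^ (n, 0).2 / (Nat.factorial (n, 0).2 : ℚ_[p])) =
          (if p ∣ n then a (n / p) else 0) := by
        simp
      rw [hval0] at hFG
      -- hFG : coeff n (E^p) = δ + Σ_erase
      rw [hAn, hTpow] at hFG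
      -- p * a n + ι c = δ + Σ
      set Ssum : ℚ_[p] := ∑ q ∈ (Finset.HasAntidiagonal.antidiagonal n).erase (n, 0),
        (if p ∣ q.1 then a (q.1 / p) else 0) *
          ((p : ℚ_[p]) ^ q.2 / (Nat.factorial q.2 : ℚ_[p])) with hS
      have hmain : (p : ℚ_[p]) * a n = Ssum + ι (d - c) := by
        rw [map_sub, hδ]
        linear_combination hFG
      have hSnorm : ‖Ssum‖ ≤ (p : ℝ)⁻¹ := by
        rw [hS]
        refine IsUltrametricDist.norm_sum_le_of_forall_le_of_nonneg (by positivity) ?_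
        intro q hq
        rw [Finset.mem_erase, Finset.HasAntidiagonal.mem_antidiagonal] at hq
        have hq2 : 1 ≤ q.2 := by
          rcases Nat.eq_zero_or_pos q.2 with h | h
          · exfalso
            apply hq.1
            have : q.1 = n := by omega
            rw [Prod.ext_iff]
            exact ⟨this, h⟩
          · exact h
        rw [norm_mul]
        have h2 : ‖(p : ℚ_[p]) ^ q.2 / (Nat.factorial q.2 : ℚ_[p])‖ ≤ (p : ℝ)⁻¹ := ah_exp_norm hq2
        have h1 : ‖(if p ∣ q.1 then a (q.1 / p) else 0 : ℚ_[p])‖ ≤ 1 := by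
          split_ifs with h
          · exact ih (q.1 / p) (lt_of_le_of_lt (Nat.div_le_self _ _) (by omega))
          · simp
        calc ‖(if p ∣ q.1 then a (q.1 / p) else 0 : ℚ_[p])‖ *
            ‖(p : ℚ_[p]) ^ q.2 / (Nat.factorial q.2 : ℚ_[p])‖
            ≤ 1 * (p : ℝ)⁻¹ := by
              exact mul_le_mul h1 h2 (norm_nonneg _) (by norm_num)
          _ = (p : ℝ)⁻¹ := one_mul _
      have hfin : ‖(p : ℚ_[p]) * a n‖ ≤ (p : ℝ)⁻¹ := by
        rw [hmain]
        exact le_trans (Padic.nonarchimedean _ _) (max_le hSnorm hnorm1)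
      rw [norm_mul, Padic.norm_p] at hfin
      have hppos : (0 : ℝ) < (p : ℝ)⁻¹ := by
        have := hp.two_le
        positivity
      have hfin2 : (p : ℝ)⁻¹ * ‖a n‖ ≤ (p : ℝ)⁻¹ * 1 := by rw [mul_one]; exact hfin
      exact (mul_le_mul_iff_of_pos_left hppos).mp hfin2
end

section
/- There exists a unique element π in the maximal ideal of R = Z_p[[T]] such that E(π) = 1 + T, where E is the Artin–Hasse exponential. -/
/-!
Write `P_n(x) = ∑_{k<n} e_k x^k` with `e_1 = 1`. For `a, b ∈ I` with `a - b ∈ I^m` the terms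
of degree `k ≥ 2` give `P_n(a) - P_n(b) ≡ a - b [mod I^(m+1)]`, so `x ↦ x + (c - P_n(x))` is a
contraction. Iterating it from `0` (with `c = e_0 + y`, `y ∈ J`) produces a `J`-adic Cauchy
sequence whose limit solves `c ≡ P_n(x) [mod J^n]`; the same estimate shows that two solutions
in `I` agree modulo every `I^n`, so they coincide when `R` is `I`-adically Hausdorff.
For `ℤ_[p]⟦T⟧` take `J = (T)`, for which `ℤ_[p]⟦T⟧` is complete, and `I = (p, T)`, which is
Hausdorff because the degree-`j` coefficients of elements of `(p, T)^(k + j + 1)` are divisible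
by `p^k`.
-/

open PowerSeries Finset

section PartialSumInverse

variable {R : Type*} [CommRing R] {I : Ideal R}

theorem Ideal.pow_succ_sub_pow_succ_mem {a b : R} (ha : a ∈ I) (hb : b ∈ I) {m : ℕ}
    (hab : a - b ∈ I ^ m) (k : ℕ) : a ^ (k + 1) - b ^ (k + 1) ∈ I ^ (k + m) := by
  rw [← geom_sum₂_mul, pow_add]
  refine Ideal.mul_mem_mul (Ideal.sum_mem _ fun i hi => ?_) hab
  have hik : i + (k + 1 - 1 - i) = k := by simp at hi; omega
  have := Ideal.mul_mem_mul (Ideal.pow_mem_pow ha i) (Ideal.pow_mem_pow hb (k + 1 - 1 - i))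
  rwa [← pow_add, hik] at this

def partialSum (e : ℕ → R) (n : ℕ) (x : R) : R := ∑ k ∈ range n, e k * x ^ k

variable (e : ℕ → R)

theorem partialSum_succ (n : ℕ) (x : R) :
    partialSum e (n + 1) x = partialSum e n x + e n * x ^ n :=
  sum_range_succ _ _

theorem partialSum_sub_partialSum_mem {J : Ideal R} {a b : R} (hab : a - b ∈ J) (n : ℕ) :
    partialSum e n a - partialSum e n b ∈ J := by
  rw [partialSum, partialSum, ← sum_sub_distrib]
  exact J.sum_mem fun k _ => by
    rw [← mul_sub]
    exact J.mul_mem_left _ (J.mem_of_dvd (sub_dvd_pow_sub_pow a b k) hab)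

theorem partialSum_sub_partialSum_sub_mem_pow_succ (he1 : e 1 = 1) {a b : R} (ha : a ∈ I)
    (hb : b ∈ I) {m : ℕ} (hab : a - b ∈ I ^ m) (n : ℕ) :
    partialSum e (n + 2) a - partialSum e (n + 2) b - (a - b) ∈ I ^ (m + 1) := by
  have hsplit : partialSum e (n + 2) a - partialSum e (n + 2) b - (a - b) =
      ∑ i ∈ range n, e (i + 2) * (a ^ (i + 1 + 1) - b ^ (i + 1 + 1)) := by
    simp only [partialSum, sum_range_succ' _ (n + 1), sum_range_succ' _ n, he1, mul_sub,
      sum_sub_distrib]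
    ring
  rw [hsplit]
  refine Ideal.sum_mem _ fun i _ => (I ^ (m + 1)).mul_mem_left _ ?_
  exact Ideal.pow_le_pow_right (by omega) (Ideal.pow_succ_sub_pow_succ_mem ha hb hab (i + 1))

theorem sub_mem_pow_of_sub_partialSum_mem_pow (he1 : e 1 = 1) {c a b : R} (ha : a ∈ I)
    (hb : b ∈ I) (hca : ∀ n, c - partialSum e n a ∈ I ^ n)
    (hcb : ∀ n, c - partialSum e n b ∈ I ^ n) (n : ℕ) : a - b ∈ I ^ n := by
  suffices ∀ n, a - b ∈ I ^ (n + 1) from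
    n.casesOn (by simp) fun n => this n
  intro n
  induction n with
  | zero => simpa using I.sub_mem ha hb
  | succ n ih =>
    have hdiff := partialSum_sub_partialSum_sub_mem_pow_succ e he1 ha hb ih n
    have hsum := Ideal.sub_mem _ (hcb (n + 2)) (hca (n + 2))
    convert Ideal.sub_mem _ hsum hdiff using 1
    ring

theorem sub_partialSum_succ_mem_pow_iff {x : R} (hx : x ∈ I) (c : R) {k n : ℕ} (hkn : k ≤ n) :
    c - partialSum e (n + 1) x ∈ I ^ k ↔ c - partialSum e n x ∈ I ^ k := by
  rw [partialSum_succ, ← sub_sub]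
  exact Submodule.sub_mem_iff_left _
    ((I ^ k).mul_mem_left _ (Ideal.pow_le_pow_right hkn (Ideal.pow_mem_pow hx n)))

def partialSumInvApprox (c : R) : ℕ → R
  | 0 => 0
  | n + 1 => partialSumInvApprox c n + (c - partialSum e (n + 2) (partialSumInvApprox c n))

theorem partialSumInvApprox_succ_sub (c : R) (n : ℕ) :
    partialSumInvApprox e c (n + 1) - partialSumInvApprox e c n =
      c - partialSum e (n + 2) (partialSumInvApprox e c n) :=
  add_sub_cancel_left _ _

variable {e}

theorem partialSumInvApprox_spec (he1 : e 1 = 1) {y : R} (hy : y ∈ I) (n : ℕ) :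
    partialSumInvApprox e (e 0 + y) n ∈ I ∧
      e 0 + y - partialSum e (n + 1) (partialSumInvApprox e (e 0 + y) n) ∈ I ^ (n + 1) := by
  induction n with
  | zero => simp [partialSumInvApprox, partialSum, hy]
  | succ n ih =>
    set x := partialSumInvApprox e (e 0 + y) n
    obtain ⟨hx, hresidual⟩ := ih
    have hstep : partialSumInvApprox e (e 0 + y) (n + 1) - x ∈ I ^ (n + 1) := by
      rwa [partialSumInvApprox_succ_sub, sub_partialSum_succ_mem_pow_iff e hx _ le_rfl]
    have hx' : partialSumInvApprox e (e 0 + y) (n + 1) ∈ I := by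
      simpa using I.add_mem hx (Ideal.pow_le_self n.succ_ne_zero hstep)
    refine ⟨hx', ?_⟩
    have h := partialSum_sub_partialSum_sub_mem_pow_succ e he1 hx' hx hstep n
    convert (I ^ (n + 1 + 1)).neg_mem h using 1
    rw [partialSumInvApprox_succ_sub]
    ring

theorem exists_mem_forall_sub_partialSum_mem_pow [IsPrecomplete I R] (he1 : e 1 = 1) {y : R}
    (hy : y ∈ I) : ∃ x ∈ I, ∀ n, e 0 + y - partialSum e n x ∈ I ^ n := by
  set F := partialSumInvApprox e (e 0 + y)
  have hF := partialSumInvApprox_spec he1 hy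
  have hcauchy : ∀ n, F n ≡ F (n + 1) [SMOD (I ^ n • ⊤ : Submodule R R)] := fun n => by
    rw [SModEq.sub_mem, smul_eq_mul, Ideal.mul_top, ← neg_sub, Submodule.neg_mem_iff,
      partialSumInvApprox_succ_sub]
    exact Ideal.pow_le_pow_right n.le_succ
      ((sub_partialSum_succ_mem_pow_iff e (hF n).1 _ le_rfl).2 (hF n).2)
  obtain ⟨L, hL⟩ :=
    IsPrecomplete.prec inferInstance ((AdicCompletion.isAdicCauchy_iff _ _ F).2 hcauchy)
  simp only [SModEq.sub_mem, smul_eq_mul, Ideal.mul_top] at hL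
  refine ⟨L, sub_sub_cancel (F 1) L ▸ I.sub_mem (hF 1).1 (by simpa using hL 1), fun n => ?_⟩
  have happrox : e 0 + y - partialSum e n (F n) ∈ I ^ n :=
    (sub_partialSum_succ_mem_pow_iff e (hF n).1 _ le_rfl).1
      (Ideal.pow_le_pow_right n.le_succ (hF n).2)
  convert (I ^ n).add_mem happrox (partialSum_sub_partialSum_mem e (hL n) n) using 1
  ring

theorem existsUnique_mem_forall_sub_partialSum_mem_pow {J : Ideal R} [IsPrecomplete J R]
    [IsHausdorff I R] (hJI : J ≤ I) (he1 : e 1 = 1) {y : R} (hy : y ∈ J) :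
    ∃! x, x ∈ I ∧ ∀ n, e 0 + y - partialSum e n x ∈ I ^ n := by
  obtain ⟨x, hxJ, hx⟩ := exists_mem_forall_sub_partialSum_mem_pow he1 hy
  have hxI : ∀ n, e 0 + y - partialSum e n x ∈ I ^ n :=
    fun n => Ideal.pow_right_mono hJI n (hx n)
  refine ⟨x, ⟨hJI hxJ, hxI⟩, fun x' ⟨hx'I, hx'⟩ => ?_⟩
  refine (IsHausdorff.eq_iff_smodEq (I := I)).2 fun n => ?_
  rw [SModEq.sub_mem, smul_eq_mul, Ideal.mul_top]
  exact sub_mem_pow_of_sub_partialSum_mem_pow e he1 hx'I (hJI hxJ) hx' hxI n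

end PartialSumInverse

section PowerSeries

variable {A : Type*} [CommRing A]

theorem PowerSeries.coeff_mem_span_pow_of_mem_span_C_X_pow {a : A} {g : A⟦X⟧} {k j : ℕ}
    (hg : g ∈ Ideal.span {C a, X} ^ (k + (j + 1))) : coeff j g ∈ Ideal.span {a} ^ k := by
  rw [Ideal.span_insert] at hg
  obtain ⟨u, hu, v, hv, rfl⟩ := Submodule.mem_sup.1 (Ideal.sup_pow_add_le_pow_sup_pow hg)
  rw [Ideal.span_singleton_pow, Ideal.mem_span_singleton] at hu hv
  obtain ⟨u, rfl⟩ := hu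
  rw [map_add, X_pow_dvd_iff.1 hv j j.lt_succ_self, add_zero, ← map_pow, coeff_C_mul,
    Ideal.span_singleton_pow]
  exact Ideal.mul_mem_right _ _ (Ideal.mem_span_singleton_self _)

instance PowerSeries.isHausdorff_span_C_X (a : A) [IsHausdorff (Ideal.span {a}) A] :
    IsHausdorff (Ideal.span {C a, X}) A⟦X⟧ := by
  refine ⟨fun g hg => ext fun j => ?_⟩
  simp only [SModEq.sub_mem, smul_eq_mul, Ideal.mul_top, sub_zero] at hg
  refine IsHausdorff.haus (I := Ideal.span {a}) inferInstance _ fun k => ?_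
  simpa [SModEq.sub_mem] using coeff_mem_span_pow_of_mem_span_C_X_pow (hg (k + (j + 1)))

end PowerSeries

instance PadicInt.isHausdorff_span_p (p : ℕ) [Fact p.Prime] :
    IsHausdorff (Ideal.span {(p : ℤ_[p])}) ℤ_[p] :=
  PadicInt.maximalIdeal_eq_span_p (p := p) ▸ inferInstance

/-- In `R = ℤ_p[[T]]` with maximal ideal `m = (p, T)`, there is a unique element
`π ∈ m` such that `E(π) = 1 + T`, where `E ∈ 1 + t + t² ℤ_p[[t]]` is the
Artin–Hasse exponential and `E(π)` is the `m`-adically convergent evaluation,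
characterized by `E(π) − Σ_{k<n} E_k π^k ∈ m^n` for all `n`. -/
theorem exists_unique_pi_artinHasse_eq_one_add_T
    (p : ℕ) [Fact p.Prime]
    (E : PowerSeries ℤ_[p])
    (h0 : PowerSeries.coeff 0 E = 1)
    (h1 : PowerSeries.coeff 1 E = 1) :
    letI m : Ideal (PowerSeries ℤ_[p]) :=
      Ideal.span {(PowerSeries.C (p : ℤ_[p]) : PowerSeries ℤ_[p]), PowerSeries.X}
    ∃! π : PowerSeries ℤ_[p], π ∈ m ∧ ∀ n : ℕ,
      (1 + PowerSeries.X) - ∑ k ∈ Finset.range n,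
        PowerSeries.C (R := ℤ_[p]) (PowerSeries.coeff k E) * π ^ k ∈ m ^ n := by
  have hXm : Ideal.span {X} ≤ Ideal.span {C (p : ℤ_[p]), X} :=
    Ideal.span_mono (Set.subset_insert _ _)
  have h := existsUnique_mem_forall_sub_partialSum_mem_pow (e := fun k => C (coeff k E)) hXm
    (by simp [h1]) (Ideal.mem_span_singleton_self X)
  simpa [h0, partialSum] using h
end

section
/- Let Ω be a 1-dimensional Noetherian local domain which is a finite type algebra over a complete Noetherian local domain R, such that Ω is m_R-adically complete as an R-module and local. Then Ω is a finite R-module. -/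
open Submodule

theorem span_eq_top_of_adicComplete {R : Type*} [CommRing R] (I : Ideal R)
    {M : Type*} [AddCommGroup M] [Module R M]
    [IsAdicComplete I R] [IsAdicComplete I M] {r : ℕ} (g : Fin r → M)
    (hg : Submodule.span R (Set.range g) ⊔ I • ⊤ = ⊤) :
    Submodule.span R (Set.range g) = ⊤ := by
  set N := Submodule.span R (Set.range g) with hN
  have key : ∀ (n : ℕ) (y : M), y ∈ (I ^ n • ⊤ : Submodule R M) →
      ∃ c : Fin r → R, (∀ i, c i ∈ I ^ n) ∧
        y - ∑ i, c i • g i ∈ (I ^ (n + 1) • ⊤ : Submodule R M) := by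
    intro n y hy
    have h1 : (I ^ n • ⊤ : Submodule R M) ≤ I ^ n • N ⊔ I ^ (n + 1) • ⊤ := by
      calc (I ^ n • ⊤ : Submodule R M) = I ^ n • (N ⊔ I • ⊤) := by rw [hg]
        _ = I ^ n • N ⊔ I ^ n • (I • ⊤) := Submodule.smul_sup _ _ _
        _ = I ^ n • N ⊔ I ^ (n + 1) • ⊤ := by rw [← Submodule.smul_assoc, pow_succ, Ideal.smul_eq_mul]
        _ ≤ I ^ n • N ⊔ I ^ (n + 1) • ⊤ := le_rfl
    rcases Submodule.mem_sup.1 (h1 hy) with ⟨u, hu, v, hv, huv⟩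
    rw [hN, Submodule.mem_ideal_smul_span_iff_exists_sum] at hu
    rcases hu with ⟨a, ha, hsum⟩
    refine ⟨fun i => a i, fun i => ha i, ?_⟩
    have h2 : (∑ i, a i • g i) = u := by
      rw [← hsum, Finsupp.sum_fintype]
      intro i; exact zero_smul R (g i)
    rw [h2, ← huv]
    simpa using hv
  choose C hC1 hC2 using key
  rw [eq_top_iff']
  intro x
  -- residual sequence
  let Y : ∀ n : ℕ, {y : M // y ∈ (I ^ n • ⊤ : Submodule R M)} := fun n =>
    Nat.rec ⟨x, by simp⟩ (fun n p => ⟨p.1 - ∑ i, C n p.1 p.2 i • g i, hC2 n p.1 p.2⟩) n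
  let c : ℕ → Fin r → R := fun n => C n (Y n).1 (Y n).2
  have hstep : ∀ n, (Y (n + 1)).1 = (Y n).1 - ∑ i, c n i • g i := fun n => rfl
  let S : ℕ → Fin r → R := fun n i => ∑ j ∈ Finset.range n, c j i
  have htel : ∀ n, x - ∑ i, S n i • g i = (Y n).1 := by
    intro n
    induction n with
    | zero => show x - _ = x; simp [S]
    | succ n ih =>
      have : ∀ i, S (n + 1) i = S n i + c n i := by
        intro i; simp [S, Finset.sum_range_succ]
      rw [hstep n, ← ih]
      simp only [this, add_smul, Finset.sum_add_distrib]
      abel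
  have hIR : ∀ m : ℕ, (I ^ m • ⊤ : Submodule R R) = I ^ m := by
    intro m; rw [smul_eq_mul, Ideal.mul_top]
  have hcauchy : ∀ i, ∀ {m n : ℕ}, m ≤ n →
      S m i ≡ S n i [SMOD (I ^ m • ⊤ : Submodule R R)] := by
    intro i m n hmn
    rw [SModEq.sub_mem, hIR]
    have : S m i - S n i = -∑ j ∈ Finset.Ico m n, c j i := by
      simp only [S]
      rw [← Finset.sum_range_add_sum_Ico (fun j => c j i) hmn]; ring
    rw [this]
    refine neg_mem (Submodule.sum_mem _ fun j hj => ?_)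
    exact Ideal.pow_le_pow_right (Finset.mem_Ico.1 hj).1 (hC1 j (Y j).1 (Y j).2 i)
  have := fun i => IsPrecomplete.prec' (fun n => S n i) (hcauchy i)
  choose L hL using this
  have hfinal : ∀ n : ℕ, x - ∑ i, L i • g i ∈ (I ^ n • ⊤ : Submodule R M) := by
    intro n
    have hdec : x - ∑ i, L i • g i
        = (x - ∑ i, S n i • g i) + ∑ i, (S n i - L i) • g i := by
      simp only [sub_smul, Finset.sum_sub_distrib]
      abel
    rw [hdec, htel n]
    refine Submodule.add_mem _ (Y n).2 (Submodule.sum_mem _ fun i _ => ?_)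
    have hi : S n i - L i ∈ I ^ n := by
      have := hL i n
      rw [SModEq.sub_mem, hIR] at this
      exact this
    exact Submodule.smul_mem_smul hi mem_top
  have hx : x - ∑ i, L i • g i = 0 := by
    refine IsHausdorff.haus (inferInstance : IsHausdorff I M) _ fun n => ?_
    rw [SModEq.zero]
    exact hfinal n
  rw [eq_of_sub_eq_zero hx]
  exact Submodule.sum_mem _ fun i _ => Submodule.smul_mem _ _ (Submodule.subset_span ⟨i, rfl⟩)

lemma two_le_ringKrullDim_of_chain {T : Type*} [CommRing T] (P0 P1 P2 : Ideal T)
    (h0 : P0.IsPrime) (h1 : P1.IsPrime) (h2 : P2.IsPrime)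
    (l01 : P0 < P1) (l12 : P1 < P2) : 2 ≤ ringKrullDim T := by
  let s : LTSeries (PrimeSpectrum T) :=
    { length := 2
      toFun := ![⟨P0, h0⟩, ⟨P1, h1⟩, ⟨P2, h2⟩]
      step := by
        intro i
        fin_cases i
        · exact (PrimeSpectrum.asIdeal_lt_asIdeal _ _).1 l01
        · exact (PrimeSpectrum.asIdeal_lt_asIdeal _ _).1 l12 }
  have := Order.LTSeries.length_le_krullDim s
  simpa [ringKrullDim, s] using this

/-- An `R`-point is module-finite over `R`: if `R` is a complete Noetherian local
domain and `Ω` is a 1-dimensional Noetherian local domain of finite type over `R`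
which is `m_R`-adically complete as an `R`-module, then `Ω` is a finite `R`-module. -/
theorem rPoint_isFinite
    (R : Type*) [CommRing R] [IsNoetherianRing R] [IsLocalRing R] [IsDomain R]
    [IsAdicComplete (IsLocalRing.maximalIdeal R) R]
    (Ω : Type*) [CommRing Ω] [IsNoetherianRing Ω] [IsLocalRing Ω] [IsDomain Ω]
    [Algebra R Ω] [Algebra.FiniteType R Ω]
    (hdim : ringKrullDim Ω = 1)
    [IsAdicComplete (IsLocalRing.maximalIdeal R) Ω] :
    Module.Finite R Ω := by
  set m : Ideal R := IsLocalRing.maximalIdeal R with hm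
  set J : Ideal Ω := m.map (algebraMap R Ω) with hJ
  -- J ≠ ⊤, by the complete Nakayama lemma with no generators
  have hJtop : J ≠ ⊤ := by
    intro htop
    have h0 : Submodule.span R (Set.range (fun x : Fin 0 => (0 : Ω))) ⊔ m • ⊤ = ⊤ := by
      rw [Ideal.smul_top_eq_map, ← hJ, htop]
      rw [eq_top_iff]
      intro x _
      exact Submodule.mem_sup_right (by trivial)
    have := span_eq_top_of_adicComplete m _ h0
    have h1 : (1 : Ω) ∈ Submodule.span R (Set.range (fun x : Fin 0 => (0 : Ω))) := by
      rw [this]; trivial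
    have : Set.range (fun x : Fin 0 => (0 : Ω)) = (∅ : Set Ω) := by
      simp
    rw [this, Submodule.span_empty, Submodule.mem_bot] at h1
    exact one_ne_zero h1
  have hJle : J ≤ IsLocalRing.maximalIdeal Ω := IsLocalRing.le_maximalIdeal hJtop
  -- Ω is not a field
  have hnf : IsLocalRing.maximalIdeal Ω ≠ ⊥ := by
    intro hbot
    have : IsField Ω := (IsLocalRing.isField_iff_maximalIdeal_eq).2 hbot
    rw [ringKrullDim_eq_zero_of_isField this] at hdim
    exact absurd hdim (by decide)
  -- J ≠ ⊥
  have hJbot : J ≠ ⊥ := by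
    intro hbot
    -- the algebra map factors through the residue field k = R/m
    have hker : m ≤ RingHom.ker (algebraMap R Ω) := by
      intro a ha
      rw [RingHom.mem_ker]
      have : algebraMap R Ω a ∈ J := Ideal.mem_map_of_mem _ ha
      rwa [hbot, Ideal.mem_bot] at this
    letI : Algebra (IsLocalRing.ResidueField R) Ω :=
      ((Ideal.Quotient.lift m (algebraMap R Ω) hker : IsLocalRing.ResidueField R →+* Ω)).toAlgebra
    haveI : IsScalarTower R (IsLocalRing.ResidueField R) Ω := IsScalarTower.of_algebraMap_eq' rfl
    haveI : Algebra.FiniteType (IsLocalRing.ResidueField R) Ω :=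
      Algebra.FiniteType.of_restrictScalars_finiteType R (IsLocalRing.ResidueField R) Ω
    haveI : IsJacobsonRing Ω := isJacobsonRing_of_finiteType (A := IsLocalRing.ResidueField R)
    have hrad : (⊥ : Ideal Ω).jacobson = ⊥ :=
      isJacobsonRing_iff_prime_eq.1 inferInstance ⊥ Ideal.bot_prime
    rw [IsLocalRing.jacobson_eq_maximalIdeal ⊥ bot_ne_top] at hrad
    exact hnf hrad
  -- every prime containing J is the maximal ideal
  have hprime : ∀ p : Ideal Ω, p.IsPrime → J ≤ p → p = IsLocalRing.maximalIdeal Ω := by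
    intro p hp hle
    have hpbot : p ≠ ⊥ := fun h => hJbot (le_bot_iff.1 (h ▸ hle))
    have hpm : p ≤ IsLocalRing.maximalIdeal Ω := IsLocalRing.le_maximalIdeal hp.ne_top
    by_contra hne
    have h2 := two_le_ringKrullDim_of_chain ⊥ p (IsLocalRing.maximalIdeal Ω)
      Ideal.bot_prime hp (IsLocalRing.maximalIdeal.isMaximal Ω).isPrime
      (bot_lt_iff_ne_bot.2 hpbot) (lt_of_le_of_ne hpm hne)
    rw [hdim] at h2
    exact absurd h2 (by decide)
  -- the quotient A = Ω ⧸ J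
  haveI : Nontrivial (Ω ⧸ J) := Ideal.Quotient.nontrivial_iff.mpr hJtop
  haveI : IsLocalRing (Ω ⧸ J) :=
    IsLocalRing.of_surjective' (Ideal.Quotient.mk J) Ideal.Quotient.mk_surjective
  haveI : IsNoetherianRing (Ω ⧸ J) := inferInstance
  -- every prime of A is the maximal ideal
  have hPA : ∀ P : Ideal (Ω ⧸ J), P.IsPrime → P = IsLocalRing.maximalIdeal (Ω ⧸ J) := by
    intro P hP
    have key : ∀ (Q : Ideal (Ω ⧸ J)), Q.IsPrime →
        Q.comap (Ideal.Quotient.mk J) = IsLocalRing.maximalIdeal Ω := by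
      intro Q hQ
      refine hprime _ (hQ.comap _) ?_
      intro x hx
      show Ideal.Quotient.mk J x ∈ Q
      rw [Ideal.Quotient.eq_zero_iff_mem.2 hx]
      exact Q.zero_mem
    have h1 := key P hP
    have h2 := key (IsLocalRing.maximalIdeal (Ω ⧸ J))
      (IsLocalRing.maximalIdeal.isMaximal _).isPrime
    calc P = (P.comap (Ideal.Quotient.mk J)).map (Ideal.Quotient.mk J) :=
        (Ideal.map_comap_of_surjective _ Ideal.Quotient.mk_surjective P).symm
      _ = IsLocalRing.maximalIdeal (Ω ⧸ J) := by
        rw [h1, ← h2, Ideal.map_comap_of_surjective _ Ideal.Quotient.mk_surjective]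
  -- the maximal ideal of A is nilpotent
  obtain ⟨nn, hnn⟩ : ∃ nn : ℕ, (IsLocalRing.maximalIdeal (Ω ⧸ J)) ^ nn = ⊥ := by
    have heq : IsLocalRing.maximalIdeal (Ω ⧸ J) = nilradical (Ω ⧸ J) := by
      haveI := (IsLocalRing.maximalIdeal.isMaximal (Ω ⧸ J)).isPrime
      refine le_antisymm ?_ (nilradical_le_prime (IsLocalRing.maximalIdeal (Ω ⧸ J)))
      rw [nilradical_eq_sInf]
      exact le_sInf fun P hP => le_of_eq (hPA P hP).symm
    obtain ⟨nn, hnn⟩ := IsNoetherianRing.isNilpotent_nilradical (Ω ⧸ J)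
    exact ⟨nn, by rw [heq, hnn, Ideal.zero_eq_bot]⟩
  -- the residue field of A is a finite R-module
  haveI hATfin : Algebra.FiniteType R (Ω ⧸ J) :=
    Algebra.FiniteType.of_surjective (Ideal.Quotient.mkₐ R J)
      (Ideal.Quotient.mkₐ_surjective R J)
  haveI hfinκ : Module.Finite R (IsLocalRing.ResidueField (Ω ⧸ J)) := by
    set κ := IsLocalRing.ResidueField (Ω ⧸ J) with hκ
    have hkerκ : m ≤ RingHom.ker (algebraMap R κ) := by
      intro a ha
      rw [RingHom.mem_ker]
      have h0 : algebraMap R (Ω ⧸ J) a = 0 := by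
        rw [IsScalarTower.algebraMap_apply R Ω (Ω ⧸ J)]
        exact Ideal.Quotient.eq_zero_iff_mem.2 (Ideal.mem_map_of_mem _ ha)
      rw [IsScalarTower.algebraMap_apply R (Ω ⧸ J) κ, h0, map_zero]
    letI : Algebra (IsLocalRing.ResidueField R) κ :=
      (Ideal.Quotient.lift m (algebraMap R κ) hkerκ : IsLocalRing.ResidueField R →+* κ).toAlgebra
    haveI : IsScalarTower R (IsLocalRing.ResidueField R) κ := IsScalarTower.of_algebraMap_eq' rfl
    haveI : Algebra.FiniteType R κ :=
      Algebra.FiniteType.of_surjective (A := Ω ⧸ J)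
        (Ideal.Quotient.mkₐ R (IsLocalRing.maximalIdeal (Ω ⧸ J)))
        (Ideal.Quotient.mkₐ_surjective R _)
    haveI : Algebra.FiniteType (IsLocalRing.ResidueField R) κ :=
      Algebra.FiniteType.of_restrictScalars_finiteType R (IsLocalRing.ResidueField R) κ
    haveI : Module.Finite (IsLocalRing.ResidueField R) κ :=
      finite_of_finite_type_of_isJacobsonRing (IsLocalRing.ResidueField R) κ
    haveI : Module.Finite R (IsLocalRing.ResidueField R) :=
      Module.Finite.of_surjective (Algebra.linearMap R (IsLocalRing.ResidueField R))
        Ideal.Quotient.mk_surjective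
    exact Module.Finite.trans (IsLocalRing.ResidueField R) κ
  -- A is integral, hence finite, over R
  haveI : Algebra.IsIntegral R (Ω ⧸ J) := by
    rw [Algebra.isIntegral_def]
    intro a
    have h1 : IsIntegral R (algebraMap (Ω ⧸ J) (IsLocalRing.ResidueField (Ω ⧸ J)) a) :=
      IsIntegral.of_finite R _
    obtain ⟨f, hf, hfa⟩ := h1
    refine ⟨f ^ nn, hf.pow nn, ?_⟩
    rw [← Polynomial.aeval_def] at hfa ⊢
    have h2 : Polynomial.aeval a f ∈ IsLocalRing.maximalIdeal (Ω ⧸ J) := by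
      rw [Polynomial.aeval_algebraMap_apply] at hfa
      rwa [← IsLocalRing.residue_eq_zero_iff]
    have h3 := Ideal.pow_mem_pow h2 nn
    rw [hnn, Ideal.mem_bot] at h3
    rw [map_pow]
    exact h3
  haveI : Module.Finite R (Ω ⧸ J) := Algebra.IsIntegral.finite
  -- lift generators and conclude by the complete Nakayama lemma
  obtain ⟨r, s, hs⟩ := Module.Finite.exists_fin (R := R) (M := Ω ⧸ J)
  choose g hgs using fun i => Ideal.Quotient.mk_surjective (I := J) (s i)
  set φ : Ω →ₗ[R] Ω ⧸ J := (Ideal.Quotient.mkₐ R J).toLinearMap with hφ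
  have hker : LinearMap.ker φ = Submodule.restrictScalars R (J : Ideal Ω) := by
    ext x
    simp [hφ, Ideal.Quotient.eq_zero_iff_mem]
  have hmap : Submodule.map φ (Submodule.span R (Set.range g)) = ⊤ := by
    rw [Submodule.map_span, ← Set.range_comp]
    have : (φ ∘ g) = s := funext fun i => hgs i
    rw [this, hs]
  have hsup : Submodule.span R (Set.range g) ⊔ m • ⊤ = ⊤ := by
    have h1 : Submodule.span R (Set.range g) ⊔ LinearMap.ker φ = ⊤ := by
      rw [← Submodule.comap_map_eq, hmap, Submodule.comap_top]
    rwa [hker, ← Ideal.smul_top_eq_map] at h1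
  have hspan := span_eq_top_of_adicComplete m g hsup
  exact ⟨Submodule.fg_def.2 ⟨Set.range g, Set.finite_range g, hspan⟩⟩
end

section
/- Let R be a commutative ring, I = (a_1, ..., a_n) a finitely generated ideal of R, and for each i let R_i = R[a_j/a_i : j ≠ i]/(a_i-torsion) be the i-th affine chart of the blow-up of Spec R at I. Then in each R_i, the ideal I·R_i is generated by a_i, and it is an invertible (locally free rank 1) ideal provided a_i is a nonzerodivisor in R_i. -/
/-- Let `R` be a commutative ring and `I = (a_1, ..., a_n)` a finitely generated
ideal.  Let `R_i` be the `i`-th affine chart of the blow-up of `Spec R` at `I`,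
i.e. the subring `R[a_j/a_i : j ≠ i]` of the localization `R_{a_i}` (in which
the `a_i`-torsion is already killed).  Then `I·R_i` is generated by `a_i`, and
`a_i` is a nonzerodivisor in `R_i`, so `I·R_i` is an invertible ideal. -/
theorem blowup_chart_ideal_principal
    (R : Type*) [CommRing R] (n : ℕ) (a : Fin n → R) (i : Fin n) :
    letI S := Localization.Away (a i)
    letI Ri : Subalgebra R S := Algebra.adjoin R
      {x : S | ∃ j : Fin n, x = algebraMap R S (a j) * IsLocalization.Away.invSelf (a i)}
    Ideal.map (algebraMap R Ri) (Ideal.span (Set.range a)) =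
      Ideal.span {algebraMap R Ri (a i)} ∧
    algebraMap R Ri (a i) ∈ nonZeroDivisors Ri := by
  set S := Localization.Away (a i)
  set Ri : Subalgebra R S := Algebra.adjoin R
    {x : S | ∃ j : Fin n, x = algebraMap R S (a j) * IsLocalization.Away.invSelf (a i)} with hRi
  constructor
  · rw [Ideal.map_span]
    apply le_antisymm
    · rw [Ideal.span_le]
      rintro _ ⟨_, ⟨j, rfl⟩, rfl⟩
      have hmem : (algebraMap R S (a j) * IsLocalization.Away.invSelf (a i)) ∈ Ri :=
        Algebra.subset_adjoin ⟨j, rfl⟩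
      have : algebraMap R Ri (a j) =
          (⟨_, hmem⟩ : Ri) * algebraMap R Ri (a i) := by
        apply Subtype.ext
        push_cast
        show algebraMap R S (a j) =
          (algebraMap R S (a j) * IsLocalization.Away.invSelf (a i)) * algebraMap R S (a i)
        rw [mul_assoc, mul_comm (IsLocalization.Away.invSelf (a i)),
          IsLocalization.Away.mul_invSelf, mul_one]
      rw [this]
      exact Ideal.mul_mem_left _ _ (Ideal.subset_span rfl)
    · rw [Ideal.span_le]
      rintro _ rfl
      exact Ideal.subset_span ⟨_, ⟨i, rfl⟩, rfl⟩
  · rw [mem_nonZeroDivisors_iff_right]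
    intro y hy
    have h1 : (y : S) * algebraMap R S (a i) = 0 := by
      have := congrArg (Subtype.val) hy
      push_cast at this
      simpa using this
    have hu : IsUnit (algebraMap R S (a i)) :=
      IsUnit.of_mul_eq_one _ (IsLocalization.Away.mul_invSelf (a i))
    have : (y : S) = 0 := by
      have := congrArg (· * IsLocalization.Away.invSelf (a i)) h1
      simp only [mul_assoc] at this
      rw [IsLocalization.Away.mul_invSelf, mul_one, zero_mul] at this
      exact this
    exact Subtype.ext this
end
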